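/- Let C_0 be an unsolved Unit Rush Hour configuration with exactly one empty cell, exit row r, and target car on row r. For any finite sequence of legal moves C_0, C_1, ..., C_n such that C_n is solved and no C_i with i < n is solved, the empty cell of C_n is at cell (r,1), immediately to the right of the target car. Hence the minimal number of moves needed to reach a solved configuration equals the minimal number of moves needed to reach a 'justsolved' configuration, i.e., a solved configuration whose empty cell is immediately to the right of the target car. -/
import Mathlib


/-- A cell of an `m × n` grid, indexed (row, column), column 0 leftmost. -/
abbrev Cell (m n : ℕ) := Fin m × Fin n

/-- `u` and `v` are horizontally adjacent. -/
def hAdj {m n : ℕ} (u v : Cell m n) : Prop :=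
  u.1 = v.1 ∧ (u.2.val + 1 = v.2.val ∨ v.2.val + 1 = u.2.val)

/-- `u` and `v` are vertically adjacent. -/
def vAdj {m n : ℕ} (u v : Cell m n) : Prop :=
  u.2 = v.2 ∧ (u.1.val + 1 = v.1.val ∨ v.1.val + 1 = u.1.val)

/-- A Unit Rush Hour configuration on an `m × n` grid with `k` (labeled) cars:
each car `i` has an orientation `ori i` (`true` = horizontal, `false` =
vertical) and a position `pos i`; distinct cars occupy distinct cells.
Cells outside the range of `pos` are empty. -/
structure RHConfig (m n k : ℕ) where
  ori : Fin k → Bool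
  pos : Fin k → Cell m n
  inj : Function.Injective pos

/-- A legal move: one car `i` slides one cell into an adjacent empty cell —
horizontally if it is a horizontal car, vertically if it is a vertical car —
while all other cars (and all orientations) stay put. -/
def RHMove {m n k : ℕ} (c c' : RHConfig m n k) : Prop :=
  c'.ori = c.ori ∧
  ∃ i : Fin k,
    (∀ j, j ≠ i → c'.pos j = c.pos j) ∧
    (∀ j, c.pos j ≠ c'.pos i) ∧
    ((c.ori i = true ∧ hAdj (c.pos i) (c'.pos i)) ∨
     (c.ori i = false ∧ vAdj (c.pos i) (c'.pos i)))

lemma ori_pres {m n k : ℕ} (f : ℕ → RHConfig m n k) :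
    ∀ N, (∀ i < N, RHMove (f i) (f (i + 1))) → (f N).ori = (f 0).ori := by
  intro N
  induction N with
  | zero => intro _; rfl
  | succ N ih =>
    intro h
    rw [(h N (Nat.lt_succ_self N)).1, ih (fun i hi => h i (by omega))]

/-- let `C0` be an unsolved Unit Rush Hour configuration with
exactly one empty cell, exit row `r`, and target car `t` (a horizontal car) on
row `r`. For any finite sequence of legal moves `C0 = f 0, f 1, ..., f N` such
that `f N` is solved and no earlier `f i` is solved, the empty cell of `f N`
is at `(r,1)`, immediately to the right of the target car. Hence the minimal
number of moves needed to reach a solved configuration equals the minimal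
number of moves needed to reach a 'justsolved' configuration (a solved one
whose empty cell is immediately to the right of the target car). -/
theorem stmt_7 {m n k : ℕ} (hn : 1 < n)
    (C0 : RHConfig m n k) (hk : k + 1 = m * n)
    (r : Fin m) (t : Fin k)
    (htH : C0.ori t = true) (htr : (C0.pos t).1 = r)
    (hunsolved : C0.pos t ≠ (r, ⟨0, by omega⟩)) :
    (∀ (N : ℕ) (f : ℕ → RHConfig m n k), f 0 = C0 →
      (∀ i < N, RHMove (f i) (f (i + 1))) →
      (f N).pos t = (r, ⟨0, by omega⟩) →
      (∀ i < N, (f i).pos t ≠ (r, ⟨0, by omega⟩)) →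
      (∀ j, (f N).pos j ≠ (r, ⟨1, hn⟩))) ∧
    sInf {N : ℕ | ∃ f : ℕ → RHConfig m n k, f 0 = C0 ∧
        (∀ i < N, RHMove (f i) (f (i + 1))) ∧
        (f N).pos t = (r, ⟨0, by omega⟩)} =
    sInf {N : ℕ | ∃ f : ℕ → RHConfig m n k, f 0 = C0 ∧
        (∀ i < N, RHMove (f i) (f (i + 1))) ∧
        (f N).pos t = (r, ⟨0, by omega⟩) ∧
        ∀ j, (f N).pos j ≠ (r, ⟨1, hn⟩)} := by

  have main : ∀ (N : ℕ) (f : ℕ → RHConfig m n k), f 0 = C0 →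
      (∀ i < N, RHMove (f i) (f (i + 1))) →
      (f N).pos t = (r, ⟨0, by omega⟩) →
      (∀ i < N, (f i).pos t ≠ (r, ⟨0, by omega⟩)) →
      (∀ j, (f N).pos j ≠ (r, ⟨1, hn⟩)) := by
    intro N f hf0 hmoves hsolved hbefore j
    match N with
    | 0 => exact absurd (hf0 ▸ hsolved) hunsolved
    | Nat.succ N =>
      obtain ⟨hori, i, hothers, hemp, hcase⟩ := hmoves N (Nat.lt_succ_self N)
      have hit : i = t := by
        by_contra h
        exact hbefore N (Nat.lt_succ_self N)
          ((hothers t (fun ht => h ht.symm)).symm.trans hsolved)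
      subst hit
      have horiN : (f N).ori i = true := by
        have := ori_pres f N (fun j hj => hmoves j (by omega))
        rw [this, hf0]; exact htH
      have hadj : hAdj ((f N).pos i) ((f (N+1)).pos i) := by
        rcases hcase with ⟨_, h⟩ | ⟨hfalse, _⟩
        · exact h
        · rw [horiN] at hfalse; exact absurd hfalse (by simp)
      have hpos : (f N).pos i = (r, ⟨1, hn⟩) := by
        obtain ⟨h1, h2⟩ := hadj
        rw [hsolved] at h1 h2
        have hcol : ((f N).pos i).2.val = 1 := by
          simp at h2; omega
        have : ((f N).pos i).2 = (⟨1, hn⟩ : Fin n) := Fin.ext hcol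
        exact Prod.ext h1 this
      by_cases hjt : j = i
      · subst hjt
        rw [hsolved]
        intro h
        have := congrArg (fun p => (Prod.snd p).val) h
        simp at this
      · rw [hothers j hjt]
        intro h
        exact hjt ((f N).inj (h.trans hpos.symm))
  refine ⟨main, ?_⟩
  set S : Set ℕ := {N : ℕ | ∃ f : ℕ → RHConfig m n k, f 0 = C0 ∧
        (∀ i < N, RHMove (f i) (f (i + 1))) ∧
        (f N).pos t = (r, ⟨0, by omega⟩)} with hS
  set J : Set ℕ := {N : ℕ | ∃ f : ℕ → RHConfig m n k, f 0 = C0 ∧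
        (∀ i < N, RHMove (f i) (f (i + 1))) ∧
        (f N).pos t = (r, ⟨0, by omega⟩) ∧
        ∀ j, (f N).pos j ≠ (r, ⟨1, hn⟩)} with hJ
  have hsub : J ⊆ S := fun N ⟨f, h0, hm, hs, _⟩ => ⟨f, h0, hm, hs⟩
  by_cases hne : S.Nonempty
  · obtain ⟨f, hf0, hm, hsol⟩ := Nat.sInf_mem hne
    have hbefore : ∀ i < sInf S, (f i).pos t ≠ (r, ⟨0, by omega⟩) := by
      intro i hi h
      have hiS : i ∈ S := ⟨f, hf0, fun j hj => hm j (by omega), h⟩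
      exact absurd (Nat.sInf_le hiS) (by omega)
    have hmem : sInf S ∈ J := ⟨f, hf0, hm, hsol, main _ f hf0 hm hsol hbefore⟩
    exact le_antisymm (Nat.sInf_le (hsub (Nat.sInf_mem ⟨_, hmem⟩))) (Nat.sInf_le hmem)
  · rw [Set.not_nonempty_iff_eq_empty] at hne
    have hJe : J = ∅ := Set.eq_empty_iff_forall_notMem.mpr (fun x hx => by
      rw [Set.eq_empty_iff_forall_notMem] at hne; exact hne x (hsub hx))
    rw [hne, hJe]
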